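/- arXiv:2505.14586 — 5 statements merged into one kernel-verified Lean document; each statement's English description precedes it below -/
import Mathlib

section
/- Let n ≥ 3 and let M be an n×n real symmetric matrix with tr M > 0 and σ₂(M) = 1, and set DF := (tr M)·I − M. There exists a constant C(n) > 0, depending only on n, such that for every n×n real symmetric matrix N with I + N positive semidefinite and tr(DF·N) ≤ 0, one has det(I + N) ≤ C(n)·(tr M)². -/
open Metric MeasureTheory

/-- The second elementary symmetric function of the eigenvalues of a symmetric
matrix, `σ₂(M) = ((tr M)² − ‖M‖_F²)/2`. -/
noncomputable def sigma2 {ι : Type*} [Fintype ι] (M : Matrix ι ι ℝ) : ℝ :=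
  (M.trace ^ 2 - ∑ i, ∑ j, M i j ^ 2) / 2

/-- The Frobenius norm of a matrix. -/
noncomputable def frobNorm {ι : Type*} [Fintype ι] (M : Matrix ι ι ℝ) : ℝ :=
  Real.sqrt (∑ i, ∑ j, M i j ^ 2)

/-- The Hessian matrix `D²u(x)` of a function on Euclidean space. -/
noncomputable def hess {ι : Type*} [Fintype ι] [DecidableEq ι]
    (u : EuclideanSpace ℝ ι → ℝ) (x : EuclideanSpace ℝ ι) : Matrix ι ι ℝ :=
  fun i j =>
    fderiv ℝ (fun y => fderiv ℝ u y (EuclideanSpace.single j (1 : ℝ))) x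
      (EuclideanSpace.single i (1 : ℝ))

/-- The Laplacian `Δu(x)`, the trace of the Hessian. -/
noncomputable def lap {ι : Type*} [Fintype ι] [DecidableEq ι]
    (u : EuclideanSpace ℝ ι → ℝ) (x : EuclideanSpace ℝ ι) : ℝ :=
  (hess u x).trace

/-! Write `t = tr M` and `λᵢ` for the eigenvalues of `M`, so that `σ₂(M) = 1` reads
`∑ λᵢ² = t² - 2`. Then every eigenvalue `t - λᵢ` of `DF` is at least `1 / t`, and at most one
of them is below `t / 4` (two eigenvalues `λᵢ, λⱼ > 3t/4` would give `λᵢ² + λⱼ² > t²`); hence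
`t ^ n ≤ 4 ^ (n - 1) t² det DF`. On the other hand, writing `DF = BᴴB`, AM–GM for the
eigenvalues of `B (I + N) Bᴴ` gives `det DF · det (I + N) ≤ (tr (DF (I + N)) / n) ^ n ≤ t ^ n`,
because `tr DF = (n - 1) t` and `tr (DF N) ≤ 0`. Together, `det (I + N) ≤ 4 ^ (n - 1) t²`. -/

open Matrix Finset Unitary
open scoped MatrixOrder

theorem Real.prod_le_sum_div_card_pow {ι : Type*} (s : Finset ι) (f : ι → ℝ)
    (hf : ∀ i ∈ s, 0 ≤ f i) : ∏ i ∈ s, f i ≤ ((∑ i ∈ s, f i) / #s) ^ #s := by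
  rcases s.eq_empty_or_nonempty with rfl | hs
  · simp
  have hcard : (0 : ℝ) < #s := by exact_mod_cast hs.card_pos
  have h := Real.geom_mean_le_arith_mean s (fun _ => 1) f (fun _ _ => zero_le_one)
    (by simpa using hcard) hf
  simp only [Real.rpow_one, one_mul, sum_const, nsmul_eq_mul, mul_one] at h
  have hprod : 0 ≤ ∏ i ∈ s, f i := prod_nonneg hf
  calc ∏ i ∈ s, f i = ((∏ i ∈ s, f i) ^ ((#s : ℝ)⁻¹)) ^ #s :=
        (Real.rpow_inv_natCast_pow hprod hs.card_pos.ne').symm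
    _ ≤ ((∑ i ∈ s, f i) / #s) ^ #s := pow_le_pow_left₀ (by positivity) h _

namespace Matrix

variable {ι : Type*} [Fintype ι] [DecidableEq ι]

theorem PosSemidef.det_le_trace_div_card_pow {A : Matrix ι ι ℝ} (hA : A.PosSemidef) :
    A.det ≤ (A.trace / Fintype.card ι) ^ Fintype.card ι := by
  rw [hA.isHermitian.det_eq_prod_eigenvalues, hA.isHermitian.trace_eq_sum_eigenvalues]
  simpa using Real.prod_le_sum_div_card_pow univ _ fun i _ => hA.eigenvalues_nonneg i

theorem PosSemidef.trace_mul_nonneg {A P : Matrix ι ι ℝ} (hA : A.PosSemidef)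
    (hP : P.PosSemidef) : 0 ≤ (A * P).trace := by
  obtain ⟨B, rfl⟩ := CStarAlgebra.nonneg_iff_eq_star_mul_self.mp hA.nonneg
  rw [mul_assoc, trace_mul_comm, mul_assoc, ← mul_assoc, star_eq_conjTranspose]
  exact (hP.mul_mul_conjTranspose_same B).trace_nonneg

theorem PosSemidef.det_mul_det_le_trace_mul_div_card_pow {A P : Matrix ι ι ℝ}
    (hA : A.PosSemidef) (hP : P.PosSemidef) :
    A.det * P.det ≤ ((A * P).trace / Fintype.card ι) ^ Fintype.card ι := by
  obtain ⟨B, rfl⟩ := CStarAlgebra.nonneg_iff_eq_star_mul_self.mp hA.nonneg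
  have h := (hP.mul_mul_conjTranspose_same B).det_le_trace_div_card_pow
  rw [det_mul, det_mul, det_conjTranspose, trace_mul_cycle] at h
  rw [det_mul, star_eq_conjTranspose, det_conjTranspose]
  convert h using 1
  ring

theorem IsHermitian.det_smul_one_sub {A : Matrix ι ι ℝ} (hA : A.IsHermitian) (t : ℝ) :
    (t • 1 - A).det = ∏ i, (t - hA.eigenvalues i) := by
  rw [smul_one_eq_diagonal, ← scalar_apply, ← eval_charpoly, hA.charpoly_eq]
  simp [Polynomial.eval_prod]

theorem IsHermitian.posSemidef_smul_one_sub {A : Matrix ι ι ℝ} (hA : A.IsHermitian) {t : ℝ}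
    (ht : ∀ i, hA.eigenvalues i ≤ t) : (t • 1 - A).PosSemidef := by
  have hspec : t • 1 - A = conjStarAlgAut ℝ _ hA.eigenvectorUnitary
      (diagonal fun i => t - hA.eigenvalues i) := by
    conv_lhs => rw [hA.spectral_theorem]
    rw [← diagonal_sub, map_sub, ← smul_one_eq_diagonal, map_smul, map_one]
    rfl
  rw [hspec]
  simpa [isUnit_coe.posSemidef_star_right_conjugate_iff, posSemidef_diagonal_iff, Pi.le_def]
    using ht

theorem IsHermitian.sum_eigenvalues_sq {A : Matrix ι ι ℝ} (hA : A.IsHermitian) :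
    ∑ i, hA.eigenvalues i ^ 2 = ∑ i, ∑ j, A i j ^ 2 := by
  have h : (A * A).trace = ∑ i, hA.eigenvalues i ^ 2 := by
    conv_lhs => rw [hA.spectral_theorem, ← map_mul, diagonal_mul_diagonal]
    simp [conjStarAlgAut_apply, trace_mul_cycle, sq]
  rw [← h]
  simp only [trace, diag, mul_apply, sq]
  congr! 2 with i _ j _
  rw [← hA.apply i j, star_trivial]

end Matrix

section EigenvalueBounds

variable {ι : Type*} [Fintype ι] {t : ℝ} {lam : ι → ℝ}

theorem one_le_mul_sub_of_sum_sq_eq (hsq : ∑ k, lam k ^ 2 = t ^ 2 - 2) (i : ι) :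
    1 ≤ t * (t - lam i) := by
  have hi : lam i ^ 2 ≤ t ^ 2 - 2 :=
    hsq ▸ single_le_sum (fun k _ => sq_nonneg (lam k)) (mem_univ i)
  nlinarith [sq_nonneg (t * lam i - (t ^ 2 - 1))]

theorem quarter_le_sub_or_quarter_le_sub (ht : 0 ≤ t) (hsq : ∑ k, lam k ^ 2 = t ^ 2 - 2)
    {i j : ι} (hij : i ≠ j) : t / 4 ≤ t - lam i ∨ t / 4 ≤ t - lam j := by
  have hij_sq : lam i ^ 2 + lam j ^ 2 ≤ t ^ 2 - 2 :=
    hsq ▸ add_le_sum (fun k _ => sq_nonneg (lam k)) (mem_univ i) (mem_univ j) hij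
  by_contra! h
  nlinarith [h.1, h.2]

theorem pow_card_le_prod_sub (ht : 0 < t) (hsq : ∑ i, lam i ^ 2 = t ^ 2 - 2) :
    t ^ Fintype.card ι ≤ 4 ^ (Fintype.card ι - 1) * t ^ 2 * ∏ i, (t - lam i) := by
  classical
  rcases isEmpty_or_nonempty ι with hι | hι
  · simp only [univ_eq_empty, sum_empty, Fintype.card_eq_zero, prod_empty, zero_tsub,
      pow_zero, one_mul, mul_one] at hsq ⊢
    linarith
  obtain ⟨k, hk⟩ := Nat.exists_eq_succ_of_ne_zero (Fintype.card_ne_zero (α := ι))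
  obtain ⟨i₀, -, hmin⟩ := exists_min_image univ (fun i => t - lam i) univ_nonempty
  have hsmall : 1 / t ≤ t - lam i₀ := by
    rw [div_le_iff₀' ht]
    exact one_le_mul_sub_of_sum_sq_eq hsq i₀
  have hlarge : ∀ j ∈ univ.erase i₀, t / 4 ≤ t - lam j := fun j hj =>
    (quarter_le_sub_or_quarter_le_sub ht.le hsq (ne_of_mem_erase hj).symm).elim
      (fun h => h.trans (hmin j (mem_univ j))) id
  have hprod : (t / 4) ^ k ≤ ∏ j ∈ univ.erase i₀, (t - lam j) := by
    simpa [card_erase_of_mem, hk, div_pow] using prod_le_prod (fun _ _ => by positivity) hlarge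
  rw [← mul_prod_erase univ _ (mem_univ i₀)]
  calc t ^ Fintype.card ι = 4 ^ (Fintype.card ι - 1) * t ^ 2 * (1 / t * (t / 4) ^ k) := by
        rw [hk, Nat.succ_sub_one, div_pow, pow_succ]
        field_simp
    _ ≤ _ := by gcongr; exact (one_div_pos.mpr ht).le.trans hsmall

end EigenvalueBounds

theorem jacobian_bound_general (n : ℕ) :
    ∃ C : ℝ, 0 < C ∧
      ∀ M : Matrix (Fin n) (Fin n) ℝ, M.IsSymm → 0 < M.trace → sigma2 M = 1 →
        ∀ N : Matrix (Fin n) (Fin n) ℝ, N.IsSymm →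
          (1 + N).PosSemidef →
          ((M.trace • (1 : Matrix (Fin n) (Fin n) ℝ) - M) * N).trace ≤ 0 →
          (1 + N).det ≤ C * M.trace ^ 2 := by
  refine ⟨4 ^ (n - 1), by positivity, fun M hM ht hσ N _ hP hDFN => ?_⟩
  set t := M.trace
  have hH : M.IsHermitian := isHermitian_iff_isSymm.mpr hM
  have hsq : ∑ i, hH.eigenvalues i ^ 2 = t ^ 2 - 2 := by
    rw [hH.sum_eigenvalues_sq]
    unfold sigma2 at hσ
    linarith
  have hDF : (t • 1 - M).PosSemidef := hH.posSemidef_smul_one_sub fun i => by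
    nlinarith [one_le_mul_sub_of_sum_sq_eq hsq i]
  have hupper : (t • 1 - M).det * (1 + N).det ≤ t ^ n := by
    have htrace : ((t • 1 - M) * (1 + N)).trace ≤ t * n := by
      rw [mul_add, mul_one, trace_add, trace_sub, trace_smul, trace_one, Fintype.card_fin]
      simp only [smul_eq_mul]
      linarith
    refine (hDF.det_mul_det_le_trace_mul_div_card_pow hP).trans ?_
    rw [Fintype.card_fin]
    exact pow_le_pow_left₀ (div_nonneg (hDF.trace_mul_nonneg hP) n.cast_nonneg)
      (div_le_of_le_mul₀ n.cast_nonneg ht.le htrace) n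
  have hlower := pow_card_le_prod_sub ht hsq
  rw [← hH.det_smul_one_sub, Fintype.card_fin] at hlower
  refine le_of_mul_le_mul_left ?_ (pow_pos ht n)
  nlinarith [mul_le_mul_of_nonneg_right hlower hP.det_nonneg,
    mul_le_mul_of_nonneg_left hupper (by positivity : (0 : ℝ) ≤ 4 ^ (n - 1) * t ^ 2)]

/-- **Jacobian bound in the measure estimate.**  For every `n ≥ 3` there is `C(n) > 0`
such that: if `M` is an `n×n` real symmetric matrix with `tr M > 0` and `σ₂(M) = 1`,
`DF := (tr M)·I − M`, and `N` is symmetric with `I + N` positive semidefinite and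
`tr(DF·N) ≤ 0`, then `det(I + N) ≤ C(n)·(tr M)²`. -/
theorem jacobian_bound (n : ℕ) (hn : 3 ≤ n) :
    ∃ C : ℝ, 0 < C ∧
      ∀ M : Matrix (Fin n) (Fin n) ℝ, M.IsSymm → 0 < M.trace → sigma2 M = 1 →
        ∀ N : Matrix (Fin n) (Fin n) ℝ, N.IsSymm →
          (1 + N).PosSemidef →
          ((M.trace • (1 : Matrix (Fin n) (Fin n) ℝ) - M) * N).trace ≤ 0 →
          (1 + N).det ≤ C * M.trace ^ 2 :=
  jacobian_bound_general n
end

section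
/- Let n ≥ 2 and define d : ℝⁿ → ℝ by d(x) = |x₁| (the distance to the hyperplane {x₁ = 0}). If φ is a C² function on a neighborhood of a point x₀ ∈ ℝⁿ whose Hessian D²φ(y) is 2-convex at every point y of that neighborhood, and φ touches d from below at x₀ (that is, φ ≤ d near x₀ and φ(x₀) = d(x₀)), then σ₂(D²φ(x₀)) ≤ 0. In particular, d is a viscosity supersolution of σ₂(D²u) = 0 (and hence of σ₂(D²u) = 1) on ℝⁿ. -/
open Metric MeasureTheory

/-- A symmetric matrix is 2-convex if `tr M ≥ 0` and `σ₂(M) ≥ 0`. -/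
def TwoConvex {ι : Type*} [Fintype ι] (M : Matrix ι ι ℝ) : Prop :=
  0 ≤ M.trace ∧ 0 ≤ sigma2 M

/-!
Along a coordinate direction `eᵢ` with `i ≠ 1` the function `d(x) = |x₁|` is constant, so
`t ↦ φ(x₀ + t eᵢ)` has a local maximum at `0` and `D²φ(x₀)ᵢᵢ ≤ 0`. Hence
`0 ≤ tr D²φ(x₀) ≤ D²φ(x₀)₁₁`, the lower bound by 2-convexity, and squaring gives
`(tr D²φ(x₀))² ≤ D²φ(x₀)₁₁² ≤ ‖D²φ(x₀)‖²`, that is `σ₂(D²φ(x₀)) ≤ 0`.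
-/

open Filter Topology

theorem IsLocalMax.deriv_deriv_nonpos {f : ℝ → ℝ} {a : ℝ} (h : IsLocalMax f a)
    (hc : ContinuousAt f a) : deriv (deriv f) a ≤ 0 := by
  by_contra! hpos
  have hmin : IsLocalMin f a := isLocalMin_of_deriv_deriv_pos hpos h.deriv_eq_zero hc
  have hconst : f =ᶠ[𝓝 a] fun _ => f a :=
    (hmin.and h).mono fun x hx => le_antisymm hx.2 hx.1
  have hderiv : deriv f =ᶠ[𝓝 a] fun _ => 0 :=
    hconst.deriv.trans (Eventually.of_forall fun x => deriv_const x (f a))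
  rw [hderiv.deriv_eq, deriv_const] at hpos
  exact lt_irrefl 0 hpos

theorem tendsto_add_smul_nhds_zero {E : Type*} [NormedAddCommGroup E] [NormedSpace ℝ E]
    (x v : E) : Tendsto (fun t : ℝ => x + t • v) (𝓝 0) (𝓝 x) := by
  have hcont : Continuous fun t : ℝ => x + t • v := by fun_prop
  simpa using hcont.tendsto 0

theorem IsLocalMax.fderiv_fderiv_apply_nonpos {E : Type*} [NormedAddCommGroup E]
    [NormedSpace ℝ E] {φ : E → ℝ} {x v : E} (hφ : ContDiffAt ℝ 2 φ x)
    (hmax : IsLocalMax (fun t : ℝ => φ (x + t • v)) 0) :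
    fderiv ℝ (fun y => fderiv ℝ φ y v) x v ≤ 0 := by
  have hline : ∀ t : ℝ, HasDerivAt (fun t : ℝ => x + t • v) v t := fun t => by
    simpa using ((hasDerivAt_id t).smul_const v).const_add x
  have hfirst : deriv (fun t : ℝ => φ (x + t • v)) =ᶠ[𝓝 0]
      fun t => fderiv ℝ φ (x + t • v) v := by
    filter_upwards [(tendsto_add_smul_nhds_zero x v).eventually (hφ.eventually (by simp))] with t ht
    exact ((ht.differentiableAt (by norm_num)).hasFDerivAt.comp_hasDerivAt t (hline t)).deriv
  have hF : DifferentiableAt ℝ (fun y => fderiv ℝ φ y v) x :=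
    ((hφ.fderiv_right (m := 1) (by norm_num)).differentiableAt (by norm_num)).clm_apply
      (differentiableAt_const v)
  have hsecond : HasDerivAt (fun t : ℝ => fderiv ℝ φ (x + t • v) v)
      (fderiv ℝ (fun y => fderiv ℝ φ y v) x v) 0 :=
    hF.hasFDerivAt.comp_hasDerivAt_of_eq (0 : ℝ) (hline 0) (by simp)
  rw [← hsecond.deriv, ← hfirst.deriv_eq]
  exact hmax.deriv_deriv_nonpos (hφ.continuousAt.comp_of_eq (hline 0).continuousAt (by simp))

theorem sigma2_nonpos_of_diag_nonpos {ι : Type*} [Fintype ι] (M : Matrix ι ι ℝ) (k : ι)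
    (htr : 0 ≤ M.trace) (hdiag : ∀ i ≠ k, M i i ≤ 0) : sigma2 M ≤ 0 := by
  classical
  have htr_le : M.trace ≤ M k k := by
    rw [Matrix.trace, ← Finset.add_sum_erase _ _ (Finset.mem_univ k)]
    have : ∑ i ∈ Finset.univ.erase k, M i i ≤ 0 :=
      Finset.sum_nonpos fun i hi => hdiag i (Finset.ne_of_mem_erase hi)
    simp only [Matrix.diag_apply]
    linarith
  have hrow : M k k ^ 2 ≤ ∑ j, M k j ^ 2 :=
    Finset.single_le_sum (f := fun j => M k j ^ 2) (fun j _ => sq_nonneg _)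
      (Finset.mem_univ k)
  have hall : ∑ j, M k j ^ 2 ≤ ∑ i, ∑ j, M i j ^ 2 :=
    Finset.single_le_sum (f := fun i => ∑ j, M i j ^ 2)
      (fun i _ => Finset.sum_nonneg fun j _ => sq_nonneg _) (Finset.mem_univ k)
  have hsq : M.trace ^ 2 ≤ M k k ^ 2 := pow_le_pow_left₀ htr htr_le 2
  rw [sigma2]
  linarith

/-- **The distance to a hyperplane is a viscosity supersolution of `σ₂(D²u) = 0`.**
Let `n ≥ 2` and `d(x) = |x₁|`.  If `φ` is `C²` on a neighborhood of `x₀` with everywhere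
2-convex Hessian and `φ` touches `d` from below at `x₀`, then `σ₂(D²φ)(x₀) ≤ 0`. -/
theorem dist_hyperplane_supersolution (n : ℕ) (hn : 2 ≤ n)
    (x₀ : EuclideanSpace ℝ (Fin n)) (φ : EuclideanSpace ℝ (Fin n) → ℝ) (ε : ℝ) (hε : 0 < ε)
    (hφ : ContDiffOn ℝ 2 φ (ball x₀ ε))
    (hconv : ∀ y ∈ ball x₀ ε, TwoConvex (hess φ y))
    (htouch : ∀ y ∈ ball x₀ ε, φ y ≤ |y (⟨0, by omega⟩ : Fin n)|)
    (heq : φ x₀ = |x₀ (⟨0, by omega⟩ : Fin n)|) :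
    sigma2 (hess φ x₀) ≤ 0 := by
  refine sigma2_nonpos_of_diag_nonpos _ ⟨0, by omega⟩ (hconv x₀ (mem_ball_self hε)).1
    fun i hi => ?_
  let e : EuclideanSpace ℝ (Fin n) := EuclideanSpace.single i 1
  refine IsLocalMax.fderiv_fderiv_apply_nonpos (v := e)
    (hφ.contDiffAt (ball_mem_nhds x₀ hε)) ?_
  filter_upwards [(tendsto_add_smul_nhds_zero x₀ e).eventually (ball_mem_nhds x₀ hε)] with t ht
  calc φ (x₀ + t • e) ≤ |(x₀ + t • e) ⟨0, by omega⟩| := htouch _ ht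
    _ = φ (x₀ + (0 : ℝ) • e) := by simp [e, hi.symm, heq]
end

section
/- Let n ≥ 2 and write points of ℝⁿ as x = (x₁, x') with x' ∈ ℝ^{n−1}. Let f(s) := s·√(−log s) for s ∈ (0, 1/2). Let h : ℝ^{n−1} → ℝ be a harmonic function, let φ be a smooth compactly supported function on ℝ^{n−1}, let K ∈ ℝ, and fix τ ∈ (0, 1/2). For δ > 0 define ψ_δ(x) := δ·φ(x')·f(x₁) + h(x') + K·x₁ on the slab {0 < x₁ < τ}. Then there exists δ₀ > 0 such that for all 0 < δ < δ₀ one has σ₂(D²ψ_δ)(x) < 1 for every x in {0 < x₁ < τ} ∩ B₂. -/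
open Metric MeasureTheory

/-- The barrier profile `f(s) = s·√(−log s)` (junk values outside `(0,1/2)`). -/
noncomputable def barrierProfile (s : ℝ) : ℝ := s * Real.sqrt (-Real.log s)

/-! In the slab, `D²ψ_δ` has `(0,0)` entry `δ φ f''` and, since `h` is harmonic, its other
diagonal entries add up to `δ f Δφ`. Keeping only the `(0,0)` entry of the Frobenius norm
gives `σ₂(D²ψ_δ) ≤ δ² (φ Δφ · f f'' + f² (Δφ)² / 2)`. Although `f''` blows up at `0`, the
profile is chosen so that `f f'' = -1/2 - 1/(4 (-log s))` and `f²` stay bounded on `(0, 1/2)`;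
as `φ` and `Δφ` are bounded, `σ₂(D²ψ_δ) ≤ C δ² < 1` for small `δ`. -/

open Filter Topology

section Hessian

variable {ι : Type*} [Fintype ι]

lemma sigma2_le_diag_mul_add (M : Matrix ι ι ℝ) (i : ι) :
    sigma2 M ≤ M i i * (M.trace - M i i) + (M.trace - M i i) ^ 2 / 2 := by
  have hsq : M i i ^ 2 ≤ ∑ k, ∑ l, M k l ^ 2 :=
    calc M i i ^ 2 ≤ ∑ l, M i l ^ 2 :=
          Finset.single_le_sum (f := fun l => M i l ^ 2) (fun _ _ => sq_nonneg _)
            (Finset.mem_univ i)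
      _ ≤ ∑ k, ∑ l, M k l ^ 2 :=
          Finset.single_le_sum (f := fun k => ∑ l, M k l ^ 2)
            (fun _ _ => Finset.sum_nonneg fun _ _ => sq_nonneg _) (Finset.mem_univ i)
  rw [sigma2]
  nlinarith

lemma ContDiff.differentiable_fderiv_apply {u : EuclideanSpace ℝ ι → ℝ} (hu : ContDiff ℝ 2 u)
    (v : EuclideanSpace ℝ ι) : Differentiable ℝ fun z => fderiv ℝ u z v :=
  ((hu.fderiv_right le_rfl).clm_apply contDiff_const).differentiable one_ne_zero

variable [DecidableEq ι]

lemma hess_apply_eq_of_eventuallyEq {u g : EuclideanSpace ℝ ι → ℝ} {x : EuclideanSpace ℝ ι}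
    {L : EuclideanSpace ℝ ι →L[ℝ] ℝ} {i j : ι}
    (hg : (fun y => fderiv ℝ u y (EuclideanSpace.single j 1)) =ᶠ[𝓝 x] g)
    (hL : HasFDerivAt g L x) :
    hess u x i j = L (EuclideanSpace.single i 1) := by
  simp only [hess]
  rw [hg.fderiv_eq, hL.fderiv]

lemma ContDiff.continuous_hess_apply {u : EuclideanSpace ℝ ι → ℝ} (hu : ContDiff ℝ 2 u)
    (i j : ι) : Continuous fun z => hess u z i j :=
  (((hu.fderiv_right le_rfl).clm_apply contDiff_const).continuous_fderiv
    one_ne_zero).clm_apply continuous_const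

lemma HasCompactSupport.hess_apply {u : EuclideanSpace ℝ ι → ℝ} (hu : HasCompactSupport u)
    (i j : ι) : HasCompactSupport fun z => hess u z i j :=
  (((hu.fderiv ℝ).comp_left (g := fun A : EuclideanSpace ℝ ι →L[ℝ] ℝ =>
    A (EuclideanSpace.single j 1)) rfl).fderiv ℝ).comp_left
    (g := fun A : EuclideanSpace ℝ ι →L[ℝ] ℝ => A (EuclideanSpace.single i 1)) rfl

lemma HasCompactSupport.exists_abs_lap_le {u : EuclideanSpace ℝ ι → ℝ}
    (hc : HasCompactSupport u) (hu : ContDiff ℝ 2 u) : ∃ C, ∀ z, |lap u z| ≤ C := by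
  choose C hC using fun i =>
    (hc.hess_apply i i).exists_bound_of_continuous (hu.continuous_hess_apply i i)
  exact ⟨∑ i, C i, fun z =>
    (Finset.abs_sum_le_sum_abs _ _).trans (Finset.sum_le_sum fun i _ => hC i z)⟩

end Hessian

section BarrierProfile

open Real Set

noncomputable def barrierProfileDeriv (s : ℝ) : ℝ :=
  √(-log s) - (2 * √(-log s))⁻¹

noncomputable def barrierProfileDeriv2 (s : ℝ) : ℝ :=
  -(2 * s * √(-log s))⁻¹ - (4 * s * (-log s) * √(-log s))⁻¹

variable {s : ℝ}

lemma neg_log_pos (hs : s ∈ Ioo (0 : ℝ) 1) : 0 < -log s :=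
  neg_pos.2 (log_neg hs.1 hs.2)

lemma hasDerivAt_sqrt_neg_log (hs : s ∈ Ioo (0 : ℝ) 1) :
    HasDerivAt (fun t => √(-log t)) (-s⁻¹ / (2 * √(-log s))) s :=
  ((hasDerivAt_log hs.1.ne').neg).sqrt (neg_log_pos hs).ne'

lemma hasDerivAt_barrierProfile (hs : s ∈ Ioo (0 : ℝ) 1) :
    HasDerivAt barrierProfile (barrierProfileDeriv s) s := by
  have hs0 : s ≠ 0 := hs.1.ne'
  have hr : 0 < √(-log s) := sqrt_pos.2 (neg_log_pos hs)
  refine ((hasDerivAt_id' s).mul (hasDerivAt_sqrt_neg_log hs)).congr_deriv ?_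
  rw [barrierProfileDeriv]
  field_simp
  ring

lemma hasDerivAt_barrierProfileDeriv (hs : s ∈ Ioo (0 : ℝ) 1) :
    HasDerivAt barrierProfileDeriv (barrierProfileDeriv2 s) s := by
  have hs0 : s ≠ 0 := hs.1.ne'
  have hr : 0 < √(-log s) := sqrt_pos.2 (neg_log_pos hs)
  have hr2 : √(-log s) ^ 2 = -log s := sq_sqrt (neg_log_pos hs).le
  have hsqrt := hasDerivAt_sqrt_neg_log hs
  refine (hsqrt.sub ((hsqrt.const_mul 2).inv (by positivity))).congr_deriv ?_
  rw [barrierProfileDeriv2]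
  set r := √(-log s)
  rw [← hr2]
  field_simp
  ring

lemma barrierProfile_sq_le_one (hs : s ∈ Ioo (0 : ℝ) 1) : barrierProfile s ^ 2 ≤ 1 := by
  have hlog := abs_log_mul_self_lt s hs.1 hs.2.le
  have hf : barrierProfile s ^ 2 = s * -(log s * s) := by
    rw [barrierProfile, mul_pow, sq_sqrt (neg_log_pos hs).le]
    ring
  rw [hf]
  nlinarith [neg_le_abs (log s * s), hs.1, hs.2]

lemma barrierProfile_mul_barrierProfileDeriv2 (hs : s ∈ Ioo (0 : ℝ) 1) :
    barrierProfile s * barrierProfileDeriv2 s = -(1 / 2) - (4 * -log s)⁻¹ := by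
  have hs0 : s ≠ 0 := hs.1.ne'
  have hr : 0 < √(-log s) := sqrt_pos.2 (neg_log_pos hs)
  have hr2 : √(-log s) ^ 2 = -log s := sq_sqrt (neg_log_pos hs).le
  rw [barrierProfile, barrierProfileDeriv2]
  set r := √(-log s)
  rw [← hr2]
  field_simp

lemma abs_barrierProfile_mul_barrierProfileDeriv2_le_one (hs : s ∈ Ioo (0 : ℝ) (1 / 2)) :
    |barrierProfile s * barrierProfileDeriv2 s| ≤ 1 := by
  have hs1 : s ∈ Ioo (0 : ℝ) 1 := ⟨hs.1, hs.2.trans (by norm_num)⟩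
  have hL : 1 / 2 < -log s := by
    have := log_lt_log hs.1 hs.2
    rw [one_div, log_inv] at this
    linarith [log_two_gt_d9]
  have hinv : (4 * -log s)⁻¹ < 1 / 2 := by
    rw [inv_lt_comm₀ (by linarith) (by norm_num)]
    linarith
  rw [barrierProfile_mul_barrierProfileDeriv2 hs1, abs_le]
  constructor <;> linarith [inv_pos.2 (show 0 < 4 * -log s by linarith)]

end BarrierProfile

section BarrierFun

open Set

variable {m : ℕ}

local notation "E" n => EuclideanSpace ℝ (Fin n)

noncomputable def tailCLM (m : ℕ) : (E (m + 1)) →L[ℝ] E m :=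
  (EuclideanSpace.equiv (Fin m) ℝ).symm.toContinuousLinearMap.comp
    (ContinuousLinearMap.pi fun k : Fin m => EuclideanSpace.proj k.succ)

@[simp] lemma tailCLM_apply (y : E (m + 1)) (k : Fin m) : tailCLM m y k = y k.succ := rfl

@[simp] lemma tailCLM_single_zero : tailCLM m (EuclideanSpace.single 0 1) = 0 := by
  ext k
  simp [Fin.succ_ne_zero]

@[simp] lemma tailCLM_single_succ (k : Fin m) :
    tailCLM m (EuclideanSpace.single k.succ 1) = EuclideanSpace.single k 1 := by
  ext i
  simp [Fin.succ_inj]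

lemma hasFDerivAt_comp_tailCLM {g : (E m) → ℝ} {y : E (m + 1)}
    (hg : DifferentiableAt ℝ g (tailCLM m y)) :
    HasFDerivAt (fun y => g (tailCLM m y)) ((fderiv ℝ g (tailCLM m y)).comp (tailCLM m)) y :=
  hg.hasFDerivAt.comp y (tailCLM m).hasFDerivAt

lemma hasFDerivAt_comp_apply_zero {F : ℝ → ℝ} {F' : ℝ} {y : E (m + 1)}
    (hF : HasDerivAt F F' (y 0)) :
    HasFDerivAt (fun y : E (m + 1) => F (y 0)) (F' • EuclideanSpace.proj (𝕜 := ℝ) 0) y :=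
  hF.comp_hasFDerivAt y (EuclideanSpace.proj (𝕜 := ℝ) (0 : Fin (m + 1))).hasFDerivAt

noncomputable def barrierFun (φ h : (E m) → ℝ) (δ K : ℝ) (y : E (m + 1)) : ℝ :=
  δ * φ (tailCLM m y) * barrierProfile (y 0) + h (tailCLM m y) + K * y 0

variable {φ h : (E m) → ℝ} {δ K : ℝ}

lemma hasFDerivAt_barrierFun (hφ : Differentiable ℝ φ) (hh : Differentiable ℝ h)
    {y : E (m + 1)} (hy : y 0 ∈ Ioo (0 : ℝ) 1) :
    HasFDerivAt (barrierFun φ h δ K)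
      ((δ * φ (tailCLM m y)) • barrierProfileDeriv (y 0) • EuclideanSpace.proj (𝕜 := ℝ) 0
        + barrierProfile (y 0) • δ • (fderiv ℝ φ (tailCLM m y)).comp (tailCLM m)
        + (fderiv ℝ h (tailCLM m y)).comp (tailCLM m)
        + K • EuclideanSpace.proj (𝕜 := ℝ) 0) y :=
  ((((hasFDerivAt_comp_tailCLM (hφ _)).const_mul δ).mul
    (hasFDerivAt_comp_apply_zero (hasDerivAt_barrierProfile hy))).add
    (hasFDerivAt_comp_tailCLM (hh _))).add
    ((EuclideanSpace.proj (𝕜 := ℝ) (0 : Fin (m + 1))).hasFDerivAt.const_mul K)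

lemma fderiv_barrierFun_single_zero (hφ : Differentiable ℝ φ) (hh : Differentiable ℝ h)
    {y : E (m + 1)} (hy : y 0 ∈ Ioo (0 : ℝ) 1) :
    fderiv ℝ (barrierFun φ h δ K) y (EuclideanSpace.single 0 1)
      = δ * φ (tailCLM m y) * barrierProfileDeriv (y 0) + K := by
  rw [(hasFDerivAt_barrierFun hφ hh hy).fderiv]
  simp

lemma fderiv_barrierFun_single_succ (hφ : Differentiable ℝ φ) (hh : Differentiable ℝ h)
    {y : E (m + 1)} (hy : y 0 ∈ Ioo (0 : ℝ) 1) (k : Fin m) :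
    fderiv ℝ (barrierFun φ h δ K) y (EuclideanSpace.single k.succ 1)
      = δ * barrierProfile (y 0) * fderiv ℝ φ (tailCLM m y) (EuclideanSpace.single k 1)
        + fderiv ℝ h (tailCLM m y) (EuclideanSpace.single k 1) := by
  rw [(hasFDerivAt_barrierFun hφ hh hy).fderiv]
  simp only [add_apply, smul_apply, PiLp.proj_apply,
    ne_eq, Fin.succ_ne_zero, not_false_eq_true, PiLp.single_eq_of_ne', smul_eq_mul, mul_zero,
    ContinuousLinearMap.comp_apply, tailCLM_single_succ, zero_add, add_zero]
  ring

lemma eventually_apply_zero_mem {x : E (m + 1)} {s : Set ℝ} (hs : IsOpen s) (hx : x 0 ∈ s) :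
    ∀ᶠ y in 𝓝 x, y 0 ∈ s :=
  (EuclideanSpace.proj (𝕜 := ℝ) (0 : Fin (m + 1))).continuous.continuousAt.eventually_mem
    (hs.mem_nhds hx)

lemma hess_barrierFun_zero_zero (hφ : Differentiable ℝ φ) (hh : Differentiable ℝ h)
    {x : E (m + 1)} (hx : x 0 ∈ Ioo (0 : ℝ) 1) :
    hess (barrierFun φ h δ K) x 0 0 = δ * φ (tailCLM m x) * barrierProfileDeriv2 (x 0) := by
  rw [hess_apply_eq_of_eventuallyEq
    ((eventually_apply_zero_mem isOpen_Ioo hx).mono fun y hy =>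
      fderiv_barrierFun_single_zero hφ hh hy)
    ((((hasFDerivAt_comp_tailCLM (hφ _)).const_mul δ).mul
      (hasFDerivAt_comp_apply_zero (hasDerivAt_barrierProfileDeriv hx))).add_const K)]
  simp

lemma hess_barrierFun_succ_succ (hφ : ContDiff ℝ 2 φ) (hh : ContDiff ℝ 2 h)
    {x : E (m + 1)} (hx : x 0 ∈ Ioo (0 : ℝ) 1) (k : Fin m) :
    hess (barrierFun φ h δ K) x k.succ k.succ
      = δ * barrierProfile (x 0) * hess φ (tailCLM m x) k k + hess h (tailCLM m x) k k := by
  rw [hess_apply_eq_of_eventuallyEq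
    ((eventually_apply_zero_mem isOpen_Ioo hx).mono fun y hy =>
      fderiv_barrierFun_single_succ (hφ.differentiable two_ne_zero)
        (hh.differentiable two_ne_zero) hy k)
    ((((hasFDerivAt_comp_apply_zero (hasDerivAt_barrierProfile hx)).const_mul δ).mul
      (hasFDerivAt_comp_tailCLM (hφ.differentiable_fderiv_apply _ _))).add
      (hasFDerivAt_comp_tailCLM (hh.differentiable_fderiv_apply _ _)))]
  simp [Fin.succ_ne_zero, hess]

lemma trace_hess_barrierFun_sub (hφ : ContDiff ℝ 2 φ) (hh : ContDiff ℝ 2 h)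
    (hharm : ∀ z, lap h z = 0) {x : E (m + 1)} (hx : x 0 ∈ Ioo (0 : ℝ) 1) :
    (hess (barrierFun φ h δ K) x).trace - hess (barrierFun φ h δ K) x 0 0
      = δ * barrierProfile (x 0) * lap φ (tailCLM m x) := by
  have hlap : ∑ k, hess h (tailCLM m x) k k = 0 := hharm (tailCLM m x)
  rw [Matrix.trace, Fin.sum_univ_succ]
  simp only [Matrix.diag, add_sub_cancel_left, hess_barrierFun_succ_succ hφ hh hx,
    Finset.sum_add_distrib, hlap, add_zero, ← Finset.mul_sum]
  rfl

lemma sigma2_hess_barrierFun_le (hφ : ContDiff ℝ 2 φ) (hh : ContDiff ℝ 2 h)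
    (hharm : ∀ z, lap h z = 0) {x : E (m + 1)} (hx : x 0 ∈ Ioo (0 : ℝ) (1 / 2)) :
    sigma2 (hess (barrierFun φ h δ K) x)
      ≤ δ ^ 2 * (|φ (tailCLM m x)| * |lap φ (tailCLM m x)| + lap φ (tailCLM m x) ^ 2 / 2) := by
  have hx1 : x 0 ∈ Ioo (0 : ℝ) 1 := ⟨hx.1, hx.2.trans (by norm_num)⟩
  have hσ := sigma2_le_diag_mul_add (hess (barrierFun φ h δ K) x) 0
  rw [trace_hess_barrierFun_sub hφ hh hharm hx1,
    hess_barrierFun_zero_zero (hφ.differentiable two_ne_zero) (hh.differentiable two_ne_zero)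
      hx1] at hσ
  set a := φ (tailCLM m x)
  set L := lap φ (tailCLM m x)
  set f := barrierProfile (x 0)
  set f'' := barrierProfileDeriv2 (x 0)
  have hcross : a * L * (f * f'') ≤ |a| * |L| :=
    calc a * L * (f * f'') ≤ |a| * |L| * |f * f''| := by
          rw [← abs_mul, ← abs_mul]
          exact le_abs_self _
      _ ≤ |a| * |L| := mul_le_of_le_one_right (by positivity)
          (abs_barrierProfile_mul_barrierProfileDeriv2_le_one hx)
  have hsq : f ^ 2 * L ^ 2 ≤ L ^ 2 :=
    mul_le_of_le_one_left (sq_nonneg L) (barrierProfile_sq_le_one hx1)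
  calc sigma2 (hess (barrierFun φ h δ K) x)
      ≤ δ * a * f'' * (δ * f * L) + (δ * f * L) ^ 2 / 2 := hσ
    _ = δ ^ 2 * (a * L * (f * f'') + f ^ 2 * L ^ 2 / 2) := by ring
    _ ≤ δ ^ 2 * (|a| * |L| + L ^ 2 / 2) := by gcongr

end BarrierFun

lemma exists_pos_forall_sq_mul_lt_one (C : ℝ) :
    ∃ δ₀ > 0, ∀ δ : ℝ, 0 < δ → δ < δ₀ → δ ^ 2 * C < 1 := by
  refine ⟨1 / (|C| + 1), by positivity, fun δ hδ hδδ₀ => ?_⟩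
  have hδC : δ * (|C| + 1) < 1 := (lt_div_iff₀ (by positivity)).1 hδδ₀
  nlinarith [le_abs_self C, abs_nonneg C]

theorem barrier_estimate_general (m : ℕ)
    (h : EuclideanSpace ℝ (Fin m) → ℝ)
    (hh : ContDiff ℝ 2 h) (hharm : ∀ y, lap h y = 0)
    (φ : EuclideanSpace ℝ (Fin m) → ℝ)
    (hφ : ContDiff ℝ (⊤ : ℕ∞) φ) (hφc : HasCompactSupport φ)
    (K τ : ℝ) (hτ : τ ∈ Set.Ioo (0 : ℝ) (1 / 2)) :
    ∃ δ₀ > 0, ∀ δ : ℝ, 0 < δ → δ < δ₀ →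
      ∀ x : EuclideanSpace ℝ (Fin (m + 1)),
        0 < x 0 → x 0 < τ → x ∈ ball (0 : EuclideanSpace ℝ (Fin (m + 1))) 2 →
        sigma2 (hess (fun y : EuclideanSpace ℝ (Fin (m + 1)) =>
          δ * φ (WithLp.toLp 2 (fun i : Fin m => y i.succ)) * barrierProfile (y 0)
            + h (WithLp.toLp 2 (fun i : Fin m => y i.succ)) + K * y 0) x) < 1 := by
  have hφ2 : ContDiff ℝ 2 φ := hφ.of_le (WithTop.coe_le_coe.2 le_top)
  obtain ⟨Cφ, hCφ⟩ := hφc.exists_bound_of_continuous hφ.continuous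
  obtain ⟨CΔ, hCΔ⟩ := hφc.exists_abs_lap_le hφ2
  have hCφ0 : 0 ≤ Cφ := (norm_nonneg _).trans (hCφ 0)
  obtain ⟨δ₀, hδ₀, hδ₀C⟩ := exists_pos_forall_sq_mul_lt_one (Cφ * CΔ + CΔ ^ 2 / 2)
  refine ⟨δ₀, hδ₀, fun δ hδ hδδ₀ x hx0 hxτ _ => ?_⟩
  set X := tailCLM m x
  have hlap_sq : lap φ X ^ 2 ≤ CΔ ^ 2 := sq_le_sq' (abs_le.1 (hCΔ X)).1 (abs_le.1 (hCΔ X)).2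
  calc sigma2 (hess (barrierFun φ h δ K) x)
      ≤ δ ^ 2 * (|φ X| * |lap φ X| + lap φ X ^ 2 / 2) :=
        sigma2_hess_barrierFun_le hφ2 hh hharm ⟨hx0, hxτ.trans hτ.2⟩
    _ ≤ δ ^ 2 * (Cφ * CΔ + CΔ ^ 2 / 2) := by
        gcongr
        · exact hCφ X
        · exact hCΔ X
    _ < 1 := hδ₀C δ hδ hδδ₀

/-- **The barrier estimate.**  Write points of `ℝⁿ = ℝ^{m+1}` as `x = (x₁, x')`.  Let `h` be
harmonic on `ℝ^m`, `φ` smooth with compact support on `ℝ^m`, `K ∈ ℝ`, `τ ∈ (0, 1/2)`, and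
for `δ > 0` set `ψ_δ(x) = δ·φ(x')·f(x₁) + h(x') + K·x₁`.  Then there is `δ₀ > 0` such that
for all `0 < δ < δ₀`, `σ₂(D²ψ_δ) < 1` on `{0 < x₁ < τ} ∩ B₂`. -/
theorem barrier_estimate (m : ℕ) (hm : 1 ≤ m)
    (h : EuclideanSpace ℝ (Fin m) → ℝ)
    (hh : ContDiff ℝ 2 h) (hharm : ∀ y, lap h y = 0)
    (φ : EuclideanSpace ℝ (Fin m) → ℝ)
    (hφ : ContDiff ℝ (⊤ : ℕ∞) φ) (hφc : HasCompactSupport φ)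
    (K τ : ℝ) (hτ : τ ∈ Set.Ioo (0 : ℝ) (1 / 2)) :
    ∃ δ₀ > 0, ∀ δ : ℝ, 0 < δ → δ < δ₀ →
      ∀ x : EuclideanSpace ℝ (Fin (m + 1)),
        0 < x 0 → x 0 < τ → x ∈ ball (0 : EuclideanSpace ℝ (Fin (m + 1))) 2 →
        sigma2 (hess (fun y : EuclideanSpace ℝ (Fin (m + 1)) =>
          δ * φ (WithLp.toLp 2 (fun i : Fin m => y i.succ)) * barrierProfile (y 0)
            + h (WithLp.toLp 2 (fun i : Fin m => y i.succ)) + K * y 0) x) < 1 :=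
  barrier_estimate_general m h hh hharm φ hφ hφc K τ hτ
end

section
/- Let n ≥ 3 and write points of ℝⁿ as x = (x', x'') with x' ∈ ℝ² and x'' ∈ ℝ^{n−2}. Define u(x', x'') := |x'|·(1 + |x''|²). Then at every point with x' ≠ 0 the function u is smooth and satisfies (1/2)·σ₂(D²u) = (n−2) + (n−2)(n−3)|x'|² + (n−4)|x''|². -/
open Metric MeasureTheory

/-- The first factor `x'` of a point `x = (x', x'') ∈ ℝ² × ℝ^{n−2}`. -/
def fstPart (m : ℕ) (x : EuclideanSpace ℝ (Fin 2 ⊕ Fin m)) : EuclideanSpace ℝ (Fin 2) :=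
  WithLp.toLp 2 (fun i => x (Sum.inl i))

/-- The second factor `x''` of a point `x = (x', x'') ∈ ℝ² × ℝ^{n−2}`. -/
def sndPart (m : ℕ) (x : EuclideanSpace ℝ (Fin 2 ⊕ Fin m)) : EuclideanSpace ℝ (Fin m) :=
  WithLp.toLp 2 (fun i => x (Sum.inr i))

/-- The function `u(x', x'') = |x'|·(1 + |x''|²)`. -/
noncomputable def modelFn (m : ℕ) (x : EuclideanSpace ℝ (Fin 2 ⊕ Fin m)) : ℝ :=
  ‖fstPart m x‖ * (1 + ‖sndPart m x‖ ^ 2)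

/-!
With `r = |x'|` and `q = |x''|²` we have `u = r (1 + q)`, and `D²u` has the block form
`[[A, B], [Bᵀ, D]]` with `A = (1 + q) r⁻³ x'⊥ x'⊥ᵀ`, `B = 2 r⁻¹ x' x''ᵀ`, `D = 2r I`, where
`x'⊥ = (-x₂, x₁)`: `A` is `1 + q` times the Hessian of `|x'|` in the plane, which has rank one.
For such a block matrix `σ₂ = σ₂(A) + σ₂(D) + tr A · tr D - ‖B‖²`, and here `σ₂(A) = 0`,
`σ₂(D) = 2m(m-1) r²`, `tr A · tr D = 2m(1 + q)` and `‖B‖² = 4q`.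
-/

open Topology

section Sigma2

open Matrix

variable {ι κ : Type*} [Fintype ι] [Fintype κ]

theorem sum_sq_smul (c : ℝ) (M : Matrix ι κ ℝ) :
    ∑ i, ∑ j, (c • M) i j ^ 2 = c ^ 2 * ∑ i, ∑ j, M i j ^ 2 := by
  simp only [Matrix.smul_apply, smul_eq_mul, mul_pow, Finset.mul_sum]

theorem sum_sq_vecMulVec (u : ι → ℝ) (v : κ → ℝ) :
    ∑ i, ∑ j, vecMulVec u v i j ^ 2 = (u ⬝ᵥ u) * (v ⬝ᵥ v) := by
  simp only [vecMulVec_apply, dotProduct, Finset.sum_mul_sum, sq]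
  exact Finset.sum_congr rfl fun _ _ => Finset.sum_congr rfl fun _ _ => by ring

theorem sigma2_fromBlocks_transpose (A : Matrix ι ι ℝ) (B : Matrix ι κ ℝ) (D : Matrix κ κ ℝ) :
    sigma2 (fromBlocks A B Bᵀ D) =
      sigma2 A + sigma2 D + A.trace * D.trace - ∑ i, ∑ k, B i k ^ 2 := by
  simp only [sigma2, trace, diag, Fintype.sum_sum_type, fromBlocks_apply₁₁, fromBlocks_apply₁₂,
    fromBlocks_apply₂₁, fromBlocks_apply₂₂, transpose_apply, Finset.sum_add_distrib]
  rw [Finset.sum_comm (f := fun k i => B i k ^ 2)]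
  ring

theorem sigma2_smul (c : ℝ) (M : Matrix ι ι ℝ) : sigma2 (c • M) = c ^ 2 * sigma2 M := by
  rw [sigma2, sigma2, sum_sq_smul, trace_smul, smul_eq_mul]
  ring

theorem sigma2_vecMulVec_self (v : ι → ℝ) : sigma2 (vecMulVec v v) = 0 := by
  rw [sigma2, sum_sq_vecMulVec, trace_vecMulVec]
  ring

theorem sigma2_one [DecidableEq ι] :
    sigma2 (1 : Matrix ι ι ℝ) = Fintype.card ι * (Fintype.card ι - 1) / 2 := by
  simp only [sigma2, trace_one, one_apply, ite_pow, one_pow, ne_eq, OfNat.ofNat_ne_zero,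
    not_false_eq_true, zero_pow, Finset.sum_ite_eq, Finset.mem_univ, if_true, Finset.sum_const,
    Finset.card_univ, nsmul_eq_mul, mul_one]
  ring

end Sigma2

theorem hess_apply_of_hasFDerivAt {ι : Type*} [Fintype ι] [DecidableEq ι]
    {u g : EuclideanSpace ℝ ι → ℝ} {g' : EuclideanSpace ℝ ι →L[ℝ] ℝ} {x : EuclideanSpace ℝ ι}
    {j : ι} (hu : (fun y => fderiv ℝ u y (EuclideanSpace.single j 1)) =ᶠ[𝓝 x] g)
    (hg : HasFDerivAt g g' x) (i : ι) :
    hess u x i j = g' (EuclideanSpace.single i 1) := by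
  rw [hess, hu.fderiv_eq, hg.fderiv]

section ModelFn

open Sum EuclideanSpace

variable {m : ℕ}

theorem norm_fstPart_sq (y : EuclideanSpace ℝ (Fin 2 ⊕ Fin m)) :
    ‖fstPart m y‖ ^ 2 = y (inl 0) ^ 2 + y (inl 1) ^ 2 := by
  simp [EuclideanSpace.norm_sq_eq, fstPart, Fin.sum_univ_two]

theorem norm_sndPart_sq (y : EuclideanSpace ℝ (Fin 2 ⊕ Fin m)) :
    ‖sndPart m y‖ ^ 2 = ∑ k, y (inr k) ^ 2 := by
  simp [EuclideanSpace.norm_sq_eq, sndPart]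

theorem contDiff_fstPart {n : WithTop ℕ∞} : ContDiff ℝ n (fstPart m) :=
  contDiff_euclidean.2 fun _ => contDiff_piLp_apply 2

theorem contDiff_sndPart {n : WithTop ℕ∞} : ContDiff ℝ n (sndPart m) :=
  contDiff_euclidean.2 fun _ => contDiff_piLp_apply 2

theorem contDiffAt_modelFn {n : WithTop ℕ∞} {x : EuclideanSpace ℝ (Fin 2 ⊕ Fin m)}
    (hx : fstPart m x ≠ 0) : ContDiffAt ℝ n (modelFn m) x :=
  (contDiff_fstPart.contDiffAt.norm ℝ hx).mul
    (contDiffAt_const.add (contDiff_sndPart.norm_sq ℝ).contDiffAt)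

theorem hasFDerivAt_norm_sndPart_sq (y : EuclideanSpace ℝ (Fin 2 ⊕ Fin m)) :
    HasFDerivAt (fun z => ‖sndPart m z‖ ^ 2)
      (∑ k, (2 * y (inr k)) • proj (𝕜 := ℝ) (inr k)) y := by
  have h := HasFDerivAt.fun_sum (u := Finset.univ) fun k _ =>
    ((proj (𝕜 := ℝ) (inr k)).hasFDerivAt (x := y)).pow 2
  refine (h.congr_fderiv ?_).congr_of_eventuallyEq (.of_forall fun z => norm_sndPart_sq z)
  simp

theorem hasFDerivAt_norm_fstPart {y : EuclideanSpace ℝ (Fin 2 ⊕ Fin m)} (hy : fstPart m y ≠ 0) :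
    HasFDerivAt (fun z => ‖fstPart m z‖)
      (‖fstPart m y‖⁻¹ • ∑ i, y (inl i) • proj (𝕜 := ℝ) (inl i)) y := by
  have hS : y (inl 0) ^ 2 + y (inl 1) ^ 2 ≠ 0 := by
    rw [← norm_fstPart_sq]
    positivity
  have h := (Real.hasDerivAt_sqrt hS).comp_hasFDerivAt y
    ((((proj (𝕜 := ℝ) (inl 0)).hasFDerivAt (x := y)).pow 2).add
      (((proj (𝕜 := ℝ) (inl 1)).hasFDerivAt (x := y)).pow 2))
  refine (h.congr_fderiv ?_).congr_of_eventuallyEq (.of_forall fun z => ?_)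
  · rw [← norm_fstPart_sq, Real.sqrt_sq (norm_nonneg _)]
    ext v
    simp only [one_div, mul_inv_rev, PiLp.proj_apply, Nat.add_one_sub_one, pow_one, nsmul_eq_mul,
      Nat.cast_ofNat, smul_add, add_apply, smul_apply, smul_eq_mul, Fin.sum_univ_two]
    field_simp
  · simp [← norm_fstPart_sq, Real.sqrt_sq (norm_nonneg _)]

noncomputable def modelFnPartial (m : ℕ) (j : Fin 2 ⊕ Fin m)
    (y : EuclideanSpace ℝ (Fin 2 ⊕ Fin m)) : ℝ :=
  Sum.elim (fun i => (1 + ‖sndPart m y‖ ^ 2) * ‖fstPart m y‖⁻¹ * y (inl i))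
    (fun k => 2 * ‖fstPart m y‖ * y (inr k)) j

theorem fderiv_modelFn_single {y : EuclideanSpace ℝ (Fin 2 ⊕ Fin m)} (hy : fstPart m y ≠ 0)
    (j : Fin 2 ⊕ Fin m) :
    fderiv ℝ (modelFn m) y (single j 1) = modelFnPartial m j y := by
  have hu : HasFDerivAt (modelFn m) _ y := (hasFDerivAt_norm_fstPart hy).mul
    ((hasFDerivAt_const 1 y).add (hasFDerivAt_norm_sndPart_sq y))
  rw [hu.fderiv]
  rcases j with i | k <;>
  · simp only [modelFnPartial, elim_inl, elim_inr, zero_apply, add_apply, smul_apply, sum_apply,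
      PiLp.proj_apply, PiLp.single_apply, inl.injEq, inr.injEq, reduceCtorEq, if_false, mul_ite,
      mul_one, mul_zero, Finset.sum_const_zero, Finset.sum_ite_eq', Finset.mem_univ, if_true,
      smul_eq_mul]
    ring

theorem eventually_fderiv_modelFn_single {x : EuclideanSpace ℝ (Fin 2 ⊕ Fin m)}
    (hx : fstPart m x ≠ 0) (j : Fin 2 ⊕ Fin m) :
    (fun y => fderiv ℝ (modelFn m) y (single j 1)) =ᶠ[𝓝 x] modelFnPartial m j :=
  ((contDiff_fstPart (n := 0)).continuous.continuousAt.eventually_ne hx).mono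
    fun _ hy => fderiv_modelFn_single hy j

open Matrix in
noncomputable def modelHess (m : ℕ) (x : EuclideanSpace ℝ (Fin 2 ⊕ Fin m)) :
    Matrix (Fin 2 ⊕ Fin m) (Fin 2 ⊕ Fin m) ℝ :=
  fromBlocks
    (((1 + ‖sndPart m x‖ ^ 2) / ‖fstPart m x‖ ^ 3) •
      vecMulVec ![-x (inl 1), x (inl 0)] ![-x (inl 1), x (inl 0)])
    ((2 / ‖fstPart m x‖) • vecMulVec (fun i => x (inl i)) (fun k => x (inr k)))
    ((2 / ‖fstPart m x‖) • vecMulVec (fun i => x (inl i)) (fun k => x (inr k)))ᵀ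
    ((2 * ‖fstPart m x‖) • 1)

theorem hess_modelFn_apply_inl {x : EuclideanSpace ℝ (Fin 2 ⊕ Fin m)} (hx : fstPart m x ≠ 0)
    (i : Fin 2 ⊕ Fin m) (j : Fin 2) :
    hess (modelFn m) x i (inl j) = modelHess m x i (inl j) := by
  have hr : ‖fstPart m x‖ ≠ 0 := norm_ne_zero_iff.2 hx
  rw [hess_apply_of_hasFDerivAt (eventually_fderiv_modelFn_single hx (inl j))
    ((((hasFDerivAt_const 1 x).add (hasFDerivAt_norm_sndPart_sq x)).mul
      ((hasDerivAt_inv hr).comp_hasFDerivAt x (hasFDerivAt_norm_fstPart hx))).mul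
      (proj (𝕜 := ℝ) (inl j)).hasFDerivAt)]
  rcases i with i | k <;>
    simp only [modelHess, Matrix.fromBlocks_apply₁₁, Matrix.fromBlocks_apply₂₁,
      Matrix.smul_apply, Matrix.transpose_apply, Matrix.vecMulVec_apply, Pi.mul_apply,
      Pi.add_apply, Function.comp_apply, zero_apply, add_apply, smul_apply, sum_apply,
      PiLp.proj_apply, PiLp.single_apply, inl.injEq, inr.injEq, reduceCtorEq, if_false, mul_ite,
      mul_one, mul_zero, Finset.sum_const_zero, Finset.sum_ite_eq', Finset.mem_univ, if_true,
      smul_eq_mul]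
  · have hr2 := norm_fstPart_sq x
    revert i j
    simp only [Fin.forall_fin_two, Matrix.cons_val_zero, Matrix.cons_val_one, if_true,
      Fin.reduceEq, if_false]
    refine ⟨⟨?_, ?_⟩, ?_, ?_⟩ <;> field_simp
    · linear_combination (1 + ‖sndPart m x‖ ^ 2) * hr2
    · ring
    · ring
    · linear_combination (1 + ‖sndPart m x‖ ^ 2) * hr2
  · ring

theorem hess_modelFn_apply_inr {x : EuclideanSpace ℝ (Fin 2 ⊕ Fin m)} (hx : fstPart m x ≠ 0)
    (i : Fin 2 ⊕ Fin m) (l : Fin m) :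
    hess (modelFn m) x i (inr l) = modelHess m x i (inr l) := by
  rw [hess_apply_of_hasFDerivAt (eventually_fderiv_modelFn_single hx (inr l))
    (((hasFDerivAt_const 2 x).mul (hasFDerivAt_norm_fstPart hx)).mul
      (proj (𝕜 := ℝ) (inr l)).hasFDerivAt)]
  rcases i with i | k <;>
    simp only [modelHess, Matrix.fromBlocks_apply₁₂, Matrix.fromBlocks_apply₂₂,
      Matrix.smul_apply, Matrix.vecMulVec_apply, Matrix.one_apply, Pi.mul_apply, zero_apply,
      add_apply, smul_apply, sum_apply, PiLp.proj_apply, PiLp.single_apply, inl.injEq, inr.injEq,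
      reduceCtorEq, if_false, mul_ite, mul_one, mul_zero, Finset.sum_const_zero,
      Finset.sum_ite_eq', Finset.mem_univ, if_true, smul_eq_mul]
  · ring
  · simp only [mul_zero, add_zero, @eq_comm _ l k]

theorem hess_modelFn {x : EuclideanSpace ℝ (Fin 2 ⊕ Fin m)} (hx : fstPart m x ≠ 0) :
    hess (modelFn m) x = modelHess m x := by
  ext i (j | l)
  exacts [hess_modelFn_apply_inl hx i j, hess_modelFn_apply_inr hx i l]

open Matrix in
theorem sigma2_modelHess {x : EuclideanSpace ℝ (Fin 2 ⊕ Fin m)} (hx : fstPart m x ≠ 0) :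
    sigma2 (modelHess m x) =
      2 * (m + m * (m - 1) * ‖fstPart m x‖ ^ 2 + (m - 2) * ‖sndPart m x‖ ^ 2) := by
  have hr : ‖fstPart m x‖ ≠ 0 := norm_ne_zero_iff.2 hx
  have hperp : ![-x (inl 1), x (inl 0)] ⬝ᵥ ![-x (inl 1), x (inl 0)] = ‖fstPart m x‖ ^ 2 := by
    rw [norm_fstPart_sq]
    simp only [dotProduct, Fin.sum_univ_two, cons_val_zero, cons_val_one]
    ring
  have hfst : (fun i => x (inl i)) ⬝ᵥ (fun i => x (inl i)) = ‖fstPart m x‖ ^ 2 := by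
    rw [norm_fstPart_sq]
    simp only [dotProduct, Fin.sum_univ_two, sq]
  have hsnd : (fun k => x (inr k)) ⬝ᵥ (fun k => x (inr k)) = ‖sndPart m x‖ ^ 2 := by
    rw [norm_sndPart_sq]
    simp only [dotProduct, sq]
  rw [modelHess, sigma2_fromBlocks_transpose, sigma2_smul, sigma2_vecMulVec_self, sigma2_smul,
    sigma2_one, trace_smul, trace_vecMulVec, trace_smul, trace_one, sum_sq_smul,
    sum_sq_vecMulVec, hperp, hfst, hsnd, Fintype.card_fin, smul_eq_mul, smul_eq_mul]
  field_simp
  ring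

end ModelFn

theorem model_computation_general (m : ℕ)
    (x : EuclideanSpace ℝ (Fin 2 ⊕ Fin m)) (hx : fstPart m x ≠ 0) :
    ContDiffAt ℝ (⊤ : ℕ∞) (modelFn m) x ∧
    (1 / 2) * sigma2 (hess (modelFn m) x) =
      (((m : ℝ) + 2) - 2)
        + (((m : ℝ) + 2) - 2) * (((m : ℝ) + 2) - 3) * ‖fstPart m x‖ ^ 2
        + (((m : ℝ) + 2) - 4) * ‖sndPart m x‖ ^ 2 := by
  refine ⟨contDiffAt_modelFn hx, ?_⟩
  rw [hess_modelFn hx, sigma2_modelHess hx]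
  ring

/-- **The model computation.**  Let `n = m + 2 ≥ 3` and write `x = (x', x'') ∈ ℝ² × ℝ^{n−2}`.
Then `u(x',x'') = |x'|(1+|x''|²)` is smooth wherever `x' ≠ 0` and satisfies there
`(1/2)·σ₂(D²u) = (n−2) + (n−2)(n−3)|x'|² + (n−4)|x''|²`. -/
theorem model_computation (m : ℕ) (hm : 1 ≤ m)
    (x : EuclideanSpace ℝ (Fin 2 ⊕ Fin m)) (hx : fstPart m x ≠ 0) :
    ContDiffAt ℝ (⊤ : ℕ∞) (modelFn m) x ∧
    (1 / 2) * sigma2 (hess (modelFn m) x) =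
      (((m : ℝ) + 2) - 2)
        + (((m : ℝ) + 2) - 2) * (((m : ℝ) + 2) - 3) * ‖fstPart m x‖ ^ 2
        + (((m : ℝ) + 2) - 4) * ‖sndPart m x‖ ^ 2 :=
  model_computation_general m x hx
end

section
/- Let w : ℝ³ → ℝ be continuous, positively one-homogeneous (w(tx) = t·w(x) for all t > 0 and x ∈ ℝ³), and smooth on ℝ³ ∖ {0}, and suppose Δw ≥ 0 and σ₂(D²w) = 0 at every point of ℝ³ ∖ {0}. Then for every x ≠ 0 the Hessian D²w(x) is positive semidefinite of rank at most 1; consequently w is a convex function on ℝ³. -/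
open Metric MeasureTheory

/-!
Euler's relation for the one-homogeneous `w` gives `D²w(x) x = 0`, so the symmetric matrix
`D²w(x)` has a zero eigenvalue and at most two nonzero ones, `λ` and `μ`. Then
`σ₂(D²w(x)) = λ μ = 0` leaves at most one nonzero eigenvalue, which equals `Δw(x) ≥ 0`: the
Hessian is positive semidefinite of rank at most one.

Hence `w` is convex along every segment avoiding the origin. A segment through the origin is the
limit of parallel translates `[x + εz, y + εz]` with `z ∉ span {x, y}`, which avoid it, and the
continuity of `w` carries the convexity inequality to the limit.
-/

open Finset Matrix Filter Topology

lemma card_ne_zero_le_one_of_sq_sum_eq_sum_sq {ι : Type*} [Fintype ι] {l : ι → ℝ}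
    (hcard : #{i | l i ≠ 0} ≤ 2) (hsq : (∑ i, l i) ^ 2 = ∑ i, l i ^ 2) :
    #{i | l i ≠ 0} ≤ 1 := by
  classical
  by_contra! h
  obtain ⟨a, b, hab, hS⟩ := card_eq_two.mp (le_antisymm hcard h)
  have hmem : ∀ i, l i ≠ 0 ↔ i ∈ ({a, b} : Finset ι) := fun i => by simp [← hS]
  have hsupp : ∀ i ∉ ({a, b} : Finset ι), l i = 0 := fun i hi => not_not.mp (mt (hmem i).mp hi)
  rw [← sum_subset (subset_univ _) fun i _ hi => hsupp i hi,
    ← sum_subset (subset_univ _) fun i _ hi => by simp [hsupp i hi],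
    sum_pair hab, sum_pair hab] at hsq
  exact mul_ne_zero ((hmem a).mpr (by simp)) ((hmem b).mpr (by simp))
    (by linear_combination hsq / 2)

lemma nonneg_of_card_ne_zero_le_one {ι : Type*} [Fintype ι] {l : ι → ℝ}
    (hcard : #{i | l i ≠ 0} ≤ 1) (hsum : 0 ≤ ∑ i, l i) (i : ι) : 0 ≤ l i := by
  by_cases hi : l i = 0
  · exact hi.ge
  have hsupp : ∀ j ≠ i, l j = 0 := fun j hj => by
    by_contra hj'
    exact hj (card_le_one.mp hcard j (by simpa using hj') i (by simpa using hi))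
  rwa [sum_eq_single i (fun j _ hj => hsupp j hj) (absurd (mem_univ i))] at hsum

lemma Matrix.IsHermitian.sum_sq_eq_sum_eigenvalues_sq {ι : Type*} [Fintype ι] [DecidableEq ι]
    {M : Matrix ι ι ℝ} (hM : M.IsHermitian) :
    ∑ i, ∑ j, M i j ^ 2 = ∑ i, hM.eigenvalues i ^ 2 := by
  have hMM : ∑ i, ∑ j, M i j ^ 2 = (M * M).trace := by
    simp only [trace, diag, mul_apply, sq]
    refine sum_congr rfl fun i _ => sum_congr rfl fun j _ => ?_
    rw [← hM.apply j i, star_trivial]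
  conv_lhs => rw [hMM, hM.spectral_theorem, ← map_mul]
  rw [Unitary.conjStarAlgAut_apply, trace_mul_cycle,
    Unitary.coe_star_mul_self, one_mul, diagonal_mul_diagonal, trace_diagonal]
  simp [sq]

lemma Matrix.IsHermitian.posSemidef_and_rank_le_one_of_sigma2_eq_zero {ι : Type*} [Fintype ι]
    [DecidableEq ι] {M : Matrix ι ι ℝ} (hM : M.IsHermitian) (hrank : M.rank ≤ 2)
    (htr : 0 ≤ M.trace) (hσ : sigma2 M = 0) :
    M.PosSemidef ∧ M.rank ≤ 1 := by
  have htr' : M.trace = ∑ i, hM.eigenvalues i := by simpa using hM.trace_eq_sum_eigenvalues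
  rw [hM.rank_eq_card_non_zero_eigs, Fintype.card_subtype] at hrank ⊢
  have hsq : (∑ i, hM.eigenvalues i) ^ 2 = ∑ i, hM.eigenvalues i ^ 2 := by
    rw [← htr', ← hM.sum_sq_eq_sum_eigenvalues_sq]
    unfold sigma2 at hσ
    linarith
  have hcard := card_ne_zero_le_one_of_sq_sum_eq_sum_sq hrank hsq
  exact ⟨hM.posSemidef_iff_eigenvalues_nonneg.mpr
    (nonneg_of_card_ne_zero_le_one hcard (htr' ▸ htr)), hcard⟩

lemma Matrix.rank_lt_card_of_mulVec_eq_zero {K ι : Type*} [Field K] [Fintype ι]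
    {M : Matrix ι ι K} {v : ι → K} (hv : v ≠ 0) (hMv : M *ᵥ v = 0) :
    M.rank < Fintype.card ι := by
  have hker : 0 < Module.finrank K (LinearMap.ker M.mulVecLin) :=
    Module.finrank_pos_iff_exists_ne_zero.mpr ⟨⟨v, hMv⟩, fun h => hv (congrArg Subtype.val h)⟩
  have := LinearMap.finrank_range_add_finrank_ker M.mulVecLin
  rw [Module.finrank_fintype_fun_eq_card] at this
  rw [Matrix.rank]
  omega

section SecondDerivative

variable {E F : Type*} [NormedAddCommGroup E] [NormedSpace ℝ E] [NormedAddCommGroup F]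
  [NormedSpace ℝ F] {w : E → F}

lemma ContDiffAt.differentiableAt_fderiv {x : E} (hw : ContDiffAt ℝ 2 w x) :
    DifferentiableAt ℝ (fderiv ℝ w) x :=
  (hw.fderiv_right (m := 1) le_rfl).differentiableAt one_ne_zero

lemma fderiv_smul_eq_of_homogeneous (hhom : ∀ t : ℝ, 0 < t → ∀ x, w (t • x) = t • w x)
    {t : ℝ} (ht : 0 < t) (x : E) :
    fderiv ℝ w (t • x) = fderiv ℝ w x := by
  have h := fderiv_comp_smul (f := w) (x := x) t
  rw [show (w <| t • ·) = t • w from funext (hhom t ht), fderiv_const_smul_field,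
    Pi.smul_apply] at h
  exact (smul_right_injective _ ht.ne' h).symm

lemma fderiv_fderiv_apply_self_eq_zero_of_homogeneous
    (hhom : ∀ t : ℝ, 0 < t → ∀ x, w (t • x) = t • w x) {x : E}
    (hx : DifferentiableAt ℝ (fderiv ℝ w) x) :
    fderiv ℝ (fderiv ℝ w) x x = 0 := by
  have hray : HasDerivAt (fun s : ℝ => fderiv ℝ w (s • x)) (fderiv ℝ (fderiv ℝ w) x x) 1 := by
    have := (hasDerivAt_id (1 : ℝ)).smul_const x
    rw [one_smul] at this
    exact hx.hasFDerivAt.comp_hasDerivAt_of_eq 1 this (one_smul ℝ x).symm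
  have hconst : (fun s : ℝ => fderiv ℝ w (s • x)) =ᶠ[𝓝 1] fun _ => fderiv ℝ w x := by
    filter_upwards [Ioi_mem_nhds one_pos] with s hs
    exact fderiv_smul_eq_of_homogeneous hhom hs x
  exact hray.unique ((hasDerivAt_const 1 _).congr_of_eventuallyEq hconst)

end SecondDerivative

section Hessian

variable {ι : Type*} [Fintype ι] [DecidableEq ι] {u : EuclideanSpace ℝ ι → ℝ}
  {x : EuclideanSpace ℝ ι}

lemma hess_apply_of_differentiableAt (hx : DifferentiableAt ℝ (fderiv ℝ u) x) (i j : ι) :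
    hess u x i j = fderiv ℝ (fderiv ℝ u) x (EuclideanSpace.single i 1)
      (EuclideanSpace.single j 1) := by
  rw [hess, fderiv_clm_apply hx (differentiableAt_const _)]
  simp

lemma dotProduct_hess_mulVec (hx : DifferentiableAt ℝ (fderiv ℝ u) x)
    (a b : EuclideanSpace ℝ ι) :
    a.ofLp ⬝ᵥ (hess u x *ᵥ b.ofLp) = fderiv ℝ (fderiv ℝ u) x a b := by
  let B := (ContinuousLinearMap.coeLM ℝ).comp (fderiv ℝ (fderiv ℝ u) x).toLinearMap
  let e := (EuclideanSpace.basisFun ι ℝ).toBasis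
  have hB : hess u x = LinearMap.toMatrix₂ e e B := by
    ext i j
    rw [hess_apply_of_differentiableAt hx, LinearMap.toMatrix₂_apply]
    simp [B, e]
  have h := apply_eq_dotProduct_toMatrix₂_mulVec e e B a b
  simp only [LinearMap.coe_comp, ContinuousLinearMap.coe_coe, Function.comp_apply,
    ContinuousLinearMap.coeLM_apply, RingHom.coe_id, CompTriple.comp_eq, B, e] at h
  rw [hB]
  exact h.symm

lemma isHermitian_hess (hu : ContDiffAt ℝ 2 u x) : (hess u x).IsHermitian := by
  have hsymm := hu.isSymmSndFDerivAt (by simp)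
  ext i j
  simp [hess_apply_of_differentiableAt hu.differentiableAt_fderiv, hsymm.eq]

lemma hess_mulVec_self_eq_zero_of_homogeneous
    (hhom : ∀ t : ℝ, 0 < t → ∀ x, u (t • x) = t * u x) (hu : ContDiffAt ℝ 2 u x) :
    hess u x *ᵥ x.ofLp = 0 := by
  have hd := hu.differentiableAt_fderiv
  have heuler := fderiv_fderiv_apply_self_eq_zero_of_homogeneous hhom hd
  ext i
  have := dotProduct_hess_mulVec hd (EuclideanSpace.single i 1) x
  rw [(hu.isSymmSndFDerivAt (by simp)).eq, heuler] at this
  simpa using this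

end Hessian

lemma posSemidef_hess_and_rank_le_one_of_sigma2_eq_zero {ι : Type*} [Fintype ι] [DecidableEq ι]
    (hι : Fintype.card ι ≤ 3) {u : EuclideanSpace ℝ ι → ℝ}
    (hhom : ∀ t : ℝ, 0 < t → ∀ x, u (t • x) = t * u x) {x : EuclideanSpace ℝ ι} (hx : x ≠ 0)
    (hu : ContDiffAt ℝ 2 u x) (hlap : 0 ≤ lap u x) (hσ : sigma2 (hess u x) = 0) :
    (hess u x).PosSemidef ∧ (hess u x).rank ≤ 1 := by
  have hrank := rank_lt_card_of_mulVec_eq_zero (by simpa using hx)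
    (hess_mulVec_self_eq_zero_of_homogeneous hhom hu)
  exact (isHermitian_hess hu).posSemidef_and_rank_le_one_of_sigma2_eq_zero (by omega) hlap hσ

section Convexity

variable {E : Type*} [NormedAddCommGroup E] [NormedSpace ℝ E] {w : E → ℝ}

lemma le_of_segment_subset_of_fderiv_fderiv_nonneg {U : Set E} (hU : IsOpen U)
    (hw : ContDiffOn ℝ 2 w U) (hpos : ∀ p ∈ U, ∀ v, 0 ≤ fderiv ℝ (fderiv ℝ w) p v v)
    {x y : E} (hxy : segment ℝ x y ⊆ U) {a b : ℝ} (ha : 0 ≤ a) (hb : 0 ≤ b) (hab : a + b = 1) :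
    w (a • x + b • y) ≤ a • w x + b • w y := by
  let γ : ℝ → E := fun t => x + t • (y - x)
  have hγU : ∀ t ∈ Set.Icc (0 : ℝ) 1, γ t ∈ U := fun t ht =>
    hxy (segment_eq_image' ℝ x y ▸ Set.mem_image_of_mem γ ht)
  have hγ : ∀ t, HasDerivAt γ (y - x) t := fun t => by
    have := ((hasDerivAt_id' t).smul_const (y - x)).const_add x
    rwa [one_smul] at this
  have hw2 : ∀ t ∈ Set.Icc (0 : ℝ) 1, ContDiffAt ℝ 2 w (γ t) := fun t ht =>
    hw.contDiffAt (hU.mem_nhds (hγU t ht))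
  have hg' : ∀ t ∈ Set.Icc (0 : ℝ) 1,
      HasDerivAt (w ∘ γ) (fderiv ℝ w (γ t) (y - x)) t := fun t ht =>
    ((hw2 t ht).differentiableAt two_ne_zero).hasFDerivAt.comp_hasDerivAt t (hγ t)
  have hg'' : ∀ t ∈ Set.Icc (0 : ℝ) 1, HasDerivAt (fun s => fderiv ℝ w (γ s) (y - x))
      (fderiv ℝ (fderiv ℝ w) (γ t) (y - x) (y - x)) t := fun t ht =>
    ((hw2 t ht).differentiableAt_fderiv.hasFDerivAt.comp_hasDerivAt t (hγ t)).clm_apply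
      (hasDerivAt_const t (y - x)) |>.congr_deriv (by simp)
  have hconv : ConvexOn ℝ (Set.Icc 0 1) (w ∘ γ) := by
    refine convexOn_of_hasDerivWithinAt2_nonneg (f' := fun t => fderiv ℝ w (γ t) (y - x))
      (f'' := fun t => fderiv ℝ (fderiv ℝ w) (γ t) (y - x) (y - x)) (convex_Icc 0 1)
      (fun t ht => (hg' t ht).continuousAt.continuousWithinAt) ?_ ?_ ?_ <;>
      rw [interior_Icc] <;> intro t ht <;> have ht' := Set.Ioo_subset_Icc_self ht
    · exact (hg' t ht').hasDerivWithinAt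
    · exact (hg'' t ht').hasDerivWithinAt
    · exact hpos _ (hγU t ht') _
  have := hconv.2 (Set.left_mem_Icc.2 zero_le_one) (Set.right_mem_Icc.2 zero_le_one) ha hb hab
  have hmid : x + b • (y - x) = a • x + b • y := by
    rw [eq_sub_of_add_eq hab]; module
  simpa [γ, hmid] using this

lemma Submodule.span_pair_ne_top [FiniteDimensional ℝ E] (hE : 3 ≤ Module.finrank ℝ E)
    (x y : E) : Submodule.span ℝ {x, y} ≠ ⊤ := by
  classical
  intro htop
  have hle := finrank_span_finset_le_card (R := ℝ) ({x, y} : Finset E)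
  rw [Finset.coe_pair, Set.finrank, htop, finrank_top] at hle
  have := Finset.card_le_two (a := x) (b := y)
  omega

lemma segment_add_smul_subset_compl_zero {x y z : E} (hz : z ∉ Submodule.span ℝ {x, y})
    {ε : ℝ} (hε : ε ≠ 0) : segment ℝ (x + ε • z) (y + ε • z) ⊆ {0}ᶜ := by
  rintro _ ⟨s, t, -, -, hst, rfl⟩ h0
  rw [Set.mem_singleton_iff] at h0
  refine hz (Submodule.mem_span_pair.mpr ⟨-ε⁻¹ * s, -ε⁻¹ * t, ?_⟩)
  have h : s • x + t • y + ε • z = 0 := by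
    linear_combination (norm := module) h0 - hst • (ε • z)
  linear_combination (norm := module) (-ε⁻¹) • h + mul_inv_cancel₀ hε • z

lemma convexOn_univ_of_fderiv_fderiv_nonneg [FiniteDimensional ℝ E]
    (hE : 3 ≤ Module.finrank ℝ E) (hcont : Continuous w) (hw : ContDiffOn ℝ 2 w {0}ᶜ)
    (hpos : ∀ p ≠ 0, ∀ v, 0 ≤ fderiv ℝ (fderiv ℝ w) p v v) :
    ConvexOn ℝ Set.univ w := by
  refine ⟨convex_univ, fun x _ y _ a b ha hb hab => ?_⟩
  obtain ⟨z, -, hz⟩ := SetLike.exists_of_lt (Submodule.span_pair_ne_top hE x y).lt_top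
  have hlim : ∀ p : E, Tendsto (fun ε : ℝ => w (p + ε • z)) (𝓝[≠] 0) (𝓝 (w p)) := fun p => by
    have : Continuous fun ε : ℝ => w (p + ε • z) := by fun_prop
    simpa using (this.tendsto 0).mono_left nhdsWithin_le_nhds
  have hshift : ∀ ε : ℝ, a • (x + ε • z) + b • (y + ε • z) = a • x + b • y + ε • z := fun ε => by
    linear_combination (norm := module) hab • (ε • z)
  refine le_of_tendsto_of_tendsto (hlim (a • x + b • y))
    (((hlim x).const_smul a).add ((hlim y).const_smul b)) ?_
  filter_upwards [self_mem_nhdsWithin] with ε hε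
  rw [← hshift]
  exact le_of_segment_subset_of_fderiv_fderiv_nonneg isOpen_compl_singleton hw hpos
    (segment_add_smul_subset_compl_zero hz hε) ha hb hab

end Convexity

/-- **One-homogeneous solutions of `σ₂(D²w) = 0` in `ℝ³` are convex.**  If `w : ℝ³ → ℝ` is
continuous, positively one-homogeneous, smooth away from the origin, subharmonic away from
the origin, and satisfies `σ₂(D²w) = 0` away from the origin, then `D²w(x)` is positive
semidefinite of rank at most `1` for every `x ≠ 0`, and `w` is convex on `ℝ³`. -/
theorem one_homogeneous_sigma2_zero_convex (w : EuclideanSpace ℝ (Fin 3) → ℝ)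
    (hcont : Continuous w)
    (hhom : ∀ t : ℝ, 0 < t → ∀ x : EuclideanSpace ℝ (Fin 3), w (t • x) = t * w x)
    (hsmooth : ContDiffOn ℝ (⊤ : ℕ∞) w {(0 : EuclideanSpace ℝ (Fin 3))}ᶜ)
    (hsub : ∀ x : EuclideanSpace ℝ (Fin 3), x ≠ 0 → 0 ≤ lap w x)
    (hsigma : ∀ x : EuclideanSpace ℝ (Fin 3), x ≠ 0 → sigma2 (hess w x) = 0) :
    (∀ x : EuclideanSpace ℝ (Fin 3), x ≠ 0 → (hess w x).PosSemidef ∧ (hess w x).rank ≤ 1) ∧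
    ConvexOn ℝ Set.univ w := by
  have hw : ContDiffOn ℝ 2 w {0}ᶜ := hsmooth.of_le (WithTop.coe_le_coe.mpr le_top)
  have hwx : ∀ x ≠ 0, ContDiffAt ℝ 2 w x := fun x hx =>
    hw.contDiffAt (isOpen_compl_singleton.mem_nhds hx)
  have hhess : ∀ x ≠ 0, (hess w x).PosSemidef ∧ (hess w x).rank ≤ 1 := fun x hx =>
    posSemidef_hess_and_rank_le_one_of_sigma2_eq_zero (by simp) hhom hx (hwx x hx) (hsub x hx)
      (hsigma x hx)
  refine ⟨hhess, convexOn_univ_of_fderiv_fderiv_nonneg (by simp) hcont hw fun p hp v => ?_⟩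
  have hquad := (hhess p hp).1.dotProduct_mulVec_nonneg v.ofLp
  rwa [star_trivial, dotProduct_hess_mulVec (hwx p hp).differentiableAt_fderiv] at hquad
end
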